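/- Let k ≥ 1 and N_NA an even integer with 4k² + 4 ≤ N_NA ≤ 4k² + 4k + 2. Then the New Amsterdam digraph on Z_{N_NA} with steps β = −α = 1 and γ = −δ = 2k + 1 has diameter exactly 2k + 1. -/

import Mathlib

/-!
Every step changes the parity of a vertex, and two consecutive steps move any vertex by
`±1 ± (2k + 1)`, that is by `±2k` or `±(2k + 2)`: doubled, these are the steps of the double-step
graph `G(N/2; ±k, ±(k + 1))`. So `2j` steps reach exactly the translates by `a + b(2k + 1)` with
`|a|, |b| ≤ j` and `a ≡ b ≡ j (mod 2)`. As `N ≤ 4k² + 4k + 2`, an even difference is `2m` modulo `N`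
with `|m| ≤ k² + k`, and then `2m = e + s(2k + 1)` with `|s|, |e| ≤ k`; so vertices of equal parity
are at distance at most `2k`, and one more step connects vertices of different parity.

Conversely, a walk from `0` to the odd vertex `2k² + 1` has odd length. If that length were at
most `2k - 1`, the walk would end at `ε + a + b(2k + 1)` with `|ε + a| ≤ k` and `|b| ≤ k - 1`, an
integer of absolute value at most `2k² - 1`, which is not congruent to `2k² + 1` modulo
`N ≥ 4k² + 4`.
-/

/-- A directed walk of length `l` from `u` to `v` in the digraph with arc relation `Adj`. -/
def DWalk {V : Type*} (Adj : V → V → Prop) (u v : V) (l : ℕ) : Prop :=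
  ∃ f : ℕ → V, f 0 = u ∧ f l = v ∧ ∀ i < l, Adj (f i) (f (i + 1))

/-- The digraph with arc relation `Adj` has diameter exactly `D`. -/
def HasDiam {V : Type*} (Adj : V → V → Prop) (D : ℕ) : Prop :=
  (∀ u v : V, ∃ l ≤ D, DWalk Adj u v l) ∧ ∃ u v : V, ∀ l, DWalk Adj u v l → D ≤ l

/-- The arc relation of the New Amsterdam digraph `NA(N; α, β, γ, δ)`. -/
def NAstep (N : ℕ) (α β γ δ : ℤ) (i j : ZMod N) : Prop :=
  (Even i.val ∧ (j = i + (α : ZMod N) ∨ j = i + (β : ZMod N))) ∨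
  (¬ Even i.val ∧ (j = i + (γ : ZMod N) ∨ j = i + (δ : ZMod N)))

namespace DWalk

variable {V : Type*} {Adj : V → V → Prop} {u v : V} {l m : ℕ}

theorem zero_iff : DWalk Adj u v 0 ↔ u = v :=
  ⟨fun ⟨_, h0, hl, _⟩ => h0.symm.trans hl,
    fun h => ⟨fun _ => u, rfl, h, fun _ hi => absurd hi (Nat.not_lt_zero _)⟩⟩

theorem succ_iff : DWalk Adj u v (l + 1) ↔ ∃ x, Adj u x ∧ DWalk Adj x v l := by
  constructor
  · rintro ⟨f, rfl, rfl, hf⟩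
    exact ⟨f 1, hf 0 (by omega), fun i => f (i + 1), rfl, rfl, fun i hi => hf (i + 1) (by omega)⟩
  · rintro ⟨x, hux, f, rfl, rfl, hf⟩
    refine ⟨fun i => if i = 0 then u else f (i - 1), rfl, by simp, ?_⟩
    rintro (_ | i) hi
    · simpa using hux
    · simpa using hf i (by omega)

theorem one_iff : DWalk Adj u v 1 ↔ Adj u v := by
  simp [succ_iff, zero_iff]

theorem add_iff : DWalk Adj u v (l + m) ↔ ∃ x, DWalk Adj u x l ∧ DWalk Adj x v m := by
  induction l generalizing u with
  | zero => simp [zero_iff]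
  | succ l ih =>
    rw [Nat.add_right_comm, succ_iff]
    simp only [ih, succ_iff]
    aesop

end DWalk

namespace ZMod

variable {N : ℕ} [NeZero N]

theorem even_val_add (hN : 2 ∣ N) (x y : ZMod N) :
    Even (x + y).val ↔ (Even x.val ↔ Even y.val) := by
  rw [val_add, Nat.even_iff, Nat.mod_mod_of_dvd _ hN, ← Nat.even_iff, Nat.even_add]

theorem even_val_intCast (hN : 2 ∣ N) (z : ℤ) : Even (z : ZMod N).val ↔ Even z := by
  rw [← Int.even_coe_nat, Int.even_iff, val_intCast, Int.emod_emod_of_dvd _ (by exact_mod_cast hN),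
    ← Int.even_iff]

theorem even_val_sub (hN : 2 ∣ N) (x y : ZMod N) :
    Even (x - y).val ↔ (Even x.val ↔ Even y.val) := by
  have := even_val_add hN (x - y) y
  rw [sub_add_cancel] at this
  tauto

theorem exists_eq_two_mul_of_even_val (k : ℕ) (hNe : Even N)
    (hN : N ≤ 4 * k ^ 2 + 4 * k + 2) {d : ZMod N} (hd : Even d.val) :
    ∃ m : ℤ, m.natAbs ≤ k ^ 2 + k ∧ d = ((2 * m : ℤ) : ZMod N) := by
  obtain ⟨r, hr⟩ := hd
  obtain ⟨n, rfl⟩ := hNe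
  have hrn : r < n := by have := d.val_lt; omega
  have hd : d = ((2 * r : ℤ) : ZMod (n + n)) := by
    rw [← d.natCast_zmod_val, hr]; push_cast; ring
  by_cases hrk : r ≤ k ^ 2 + k
  · exact ⟨r, by omega, hd⟩
  · refine ⟨r - n, by omega, ?_⟩
    rw [hd, intCast_eq_intCast_iff_dvd_sub]
    exact ⟨-1, by push_cast; ring⟩

end ZMod

namespace Int

theorem exists_natAbs_eq_one_natAbs_sub_le {a : ℤ} {j : ℕ} (ha : a.natAbs ≤ j + 1)
    (hpar : Even (a + (j + 1))) :
    ∃ ε : ℤ, ε.natAbs = 1 ∧ (a - ε).natAbs ≤ j ∧ Even (a - ε + j) := by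
  simp only [even_iff] at hpar ⊢
  rcases le_or_gt a 0 with h | h
  exacts [⟨-1, rfl, by omega, by omega⟩, ⟨1, rfl, by omega, by omega⟩]

theorem exists_two_mul_eq_add_mul (k : ℕ) {m : ℤ} (hm : m.natAbs ≤ k ^ 2 + k) :
    ∃ s e : ℤ, s.natAbs ≤ k ∧ e.natAbs ≤ k ∧ 2 * m = e + s * (2 * k + 1) := by
  -- divide `2m + k` by `2k + 1` and shift the remainder into `[-k, k]`
  have hpos : (0 : ℤ) < 2 * k + 1 := by positivity
  have hdiv := mul_ediv_add_emod (2 * m + k) (2 * k + 1)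
  have hr₀ := emod_nonneg (2 * m + k) hpos.ne'
  have hr₁ := emod_lt_of_pos (2 * m + k) hpos
  set s := (2 * m + k) / (2 * k + 1)
  have hm' : |m| ≤ (k : ℤ) ^ 2 + k := by rw [abs_eq_natAbs]; exact_mod_cast hm
  obtain ⟨hml, hmu⟩ := abs_le.1 hm'
  have hsu : s ≤ k := by nlinarith
  have hsl : -(k : ℤ) ≤ s := by nlinarith
  exact ⟨s, (2 * m + k) % (2 * k + 1) - k, by omega, by omega, by linarith⟩

end Int

namespace NAstep

variable {N k : ℕ} {c : ℤ} {i j u v : ZMod N}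

theorem iff_of_even (hi : Even i.val) :
    NAstep N (-1) 1 c (-c) i j ↔ ∃ ε : ℤ, ε.natAbs = 1 ∧ j = i + ε := by
  simp only [NAstep, hi, not_true_eq_false, false_and, or_false, true_and]
  constructor
  · rintro (h | h) <;> exact ⟨_, by decide, h⟩
  · rintro ⟨ε, hε, rfl⟩
    obtain rfl | rfl : ε = -1 ∨ ε = 1 := by omega
    exacts [Or.inl rfl, Or.inr rfl]

theorem iff_of_not_even (hi : ¬ Even i.val) :
    NAstep N (-1) 1 c (-c) i j ↔ ∃ ε : ℤ, ε.natAbs = 1 ∧ j = i + ((ε * c : ℤ) : ZMod N) := by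
  simp only [NAstep, hi, false_and, false_or, not_false_eq_true, true_and]
  constructor
  · rintro (h | h)
    · exact ⟨1, rfl, by simpa using h⟩
    · exact ⟨-1, rfl, by simpa using h⟩
  · rintro ⟨ε, hε, rfl⟩
    obtain rfl | rfl : ε = 1 ∨ ε = -1 := by omega
    exacts [Or.inl (by simp), Or.inr (by simp)]

theorem exists_step (i : ZMod N) : ∃ j, NAstep N (-1) 1 c (-c) i j := by
  by_cases hi : Even i.val
  exacts [⟨_, (iff_of_even hi).2 ⟨1, rfl, rfl⟩⟩, ⟨_, (iff_of_not_even hi).2 ⟨1, rfl, rfl⟩⟩]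

variable [NeZero N]

theorem even_val_iff (hN : 2 ∣ N) (hc : Odd c) (h : NAstep N (-1) 1 c (-c) i j) :
    Even j.val ↔ ¬ Even i.val := by
  by_cases hi : Even i.val
  · obtain ⟨ε, hε, rfl⟩ := (iff_of_even hi).1 h
    have : ¬ Even ε := by rw [Int.not_even_iff_odd, Int.odd_iff]; omega
    rw [ZMod.even_val_add hN, ZMod.even_val_intCast hN]
    tauto
  · obtain ⟨ε, hε, rfl⟩ := (iff_of_not_even hi).1 h
    have : ¬ Even (ε * c) := by
      rw [Int.not_even_iff_odd, Int.odd_mul, Int.odd_iff]; exact ⟨by omega, hc⟩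
    rw [ZMod.even_val_add hN, ZMod.even_val_intCast hN]
    tauto

theorem dWalk_even_val_iff (hN : 2 ∣ N) (hc : Odd c) {l : ℕ}
    (h : DWalk (NAstep N (-1) 1 c (-c)) u v l) : Even v.val ↔ (Even u.val ↔ Even l) := by
  induction l generalizing u with
  | zero => simp [DWalk.zero_iff.1 h]
  | succ l ih =>
    obtain ⟨x, hux, hxv⟩ := DWalk.succ_iff.1 h
    rw [ih hxv, hux.even_val_iff hN hc, Nat.even_add_one]
    tauto

theorem dWalk_two_iff (hN : 2 ∣ N) (hc : Odd c) :
    DWalk (NAstep N (-1) 1 c (-c)) u v 2 ↔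
      ∃ ε δ : ℤ, ε.natAbs = 1 ∧ δ.natAbs = 1 ∧ v = u + ε + ((δ * c : ℤ) : ZMod N) := by
  rw [show 2 = 1 + 1 from rfl, DWalk.add_iff]
  simp only [DWalk.one_iff]
  by_cases hu : Even u.val
  · constructor
    · rintro ⟨x, hux, hxv⟩
      obtain ⟨ε, hε, rfl⟩ := (iff_of_even hu).1 hux
      obtain ⟨δ, hδ, rfl⟩ := (iff_of_not_even ((hux.even_val_iff hN hc).not_left.2 hu)).1 hxv
      exact ⟨ε, δ, hε, hδ, rfl⟩
    · rintro ⟨ε, δ, hε, hδ, rfl⟩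
      have hux := (iff_of_even (c := c) hu).2 ⟨ε, hε, rfl⟩
      exact ⟨_, hux, (iff_of_not_even ((hux.even_val_iff hN hc).not_left.2 hu)).2 ⟨δ, hδ, rfl⟩⟩
  · constructor
    · rintro ⟨x, hux, hxv⟩
      obtain ⟨δ, hδ, rfl⟩ := (iff_of_not_even hu).1 hux
      obtain ⟨ε, hε, rfl⟩ := (iff_of_even ((hux.even_val_iff hN hc).2 hu)).1 hxv
      exact ⟨ε, δ, hε, hδ, add_right_comm _ _ _⟩
    · rintro ⟨ε, δ, hε, hδ, rfl⟩
      have hux := (iff_of_not_even (c := c) hu).2 ⟨δ, hδ, rfl⟩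
      exact ⟨_, hux, (iff_of_even ((hux.even_val_iff hN hc).2 hu)).2 ⟨ε, hε, add_right_comm _ _ _⟩⟩

theorem dWalk_two_mul_iff (hN : 2 ∣ N) (hc : Odd c) {j : ℕ} :
    DWalk (NAstep N (-1) 1 c (-c)) u v (2 * j) ↔
      ∃ a b : ℤ, a.natAbs ≤ j ∧ b.natAbs ≤ j ∧ Even (a + j) ∧ Even (b + j) ∧
        v = u + a + ((b * c : ℤ) : ZMod N) := by
  induction j generalizing u with
  | zero =>
    simp only [mul_zero, DWalk.zero_iff, Nat.le_zero, Int.natAbs_eq_zero, CharP.cast_eq_zero]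
    constructor
    · rintro rfl; exact ⟨0, 0, rfl, rfl, by simp, by simp, by simp⟩
    · rintro ⟨a, b, rfl, rfl, -, -, rfl⟩; simp
  | succ j ih =>
    rw [Nat.mul_succ, Nat.add_comm, DWalk.add_iff]
    simp only [dWalk_two_iff hN hc, ih]
    constructor
    · rintro ⟨x, ⟨ε, δ, hε, hδ, rfl⟩, a, b, ha, hb, hpa, hpb, rfl⟩
      refine ⟨ε + a, δ + b, by omega, by omega, ?_, ?_, by push_cast; ring⟩ <;>
        simp only [Int.even_iff] at * <;> push_cast <;> omega
    · rintro ⟨a, b, ha, hb, hpa, hpb, rfl⟩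
      obtain ⟨ε, hε, ha', hpa'⟩ := Int.exists_natAbs_eq_one_natAbs_sub_le ha (by exact_mod_cast hpa)
      obtain ⟨δ, hδ, hb', hpb'⟩ := Int.exists_natAbs_eq_one_natAbs_sub_le hb (by exact_mod_cast hpb)
      refine ⟨_, ⟨ε, δ, hε, hδ, rfl⟩, a - ε, b - δ, ha', hb', hpa', hpb', ?_⟩
      push_cast; ring

theorem exists_dWalk_le_of_even_val_sub (hNe : Even N) (hN : N ≤ 4 * k ^ 2 + 4 * k + 2)
    (huv : Even (v - u).val) :
    ∃ l ≤ 2 * k, DWalk (NAstep N (-1) 1 (2 * (k : ℤ) + 1) (-(2 * (k : ℤ) + 1))) u v l := by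
  obtain ⟨m, hm, hvu⟩ := ZMod.exists_eq_two_mul_of_even_val k hNe hN huv
  obtain ⟨s, e, hs, he, hme⟩ := Int.exists_two_mul_eq_add_mul k hm
  refine ⟨2 * max s.natAbs e.natAbs, by omega, ?_⟩
  rw [dWalk_two_mul_iff hNe.two_dvd (odd_two_mul_add_one _)]
  have hes : e + s = 2 * (m - s * k) := by linarith
  refine ⟨e, s, by omega, by omega, ?_, ?_, ?_⟩
  · simp only [Int.even_iff]; omega
  · simp only [Int.even_iff]; omega
  · rw [add_assoc, ← Int.cast_add, ← hme, ← hvu, add_sub_cancel]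

theorem exists_dWalk_le (hNe : Even N) (hN : N ≤ 4 * k ^ 2 + 4 * k + 2) (u v : ZMod N) :
    ∃ l ≤ 2 * k + 1, DWalk (NAstep N (-1) 1 (2 * (k : ℤ) + 1) (-(2 * (k : ℤ) + 1))) u v l := by
  by_cases huv : Even (v - u).val
  · obtain ⟨l, hl, h⟩ := exists_dWalk_le_of_even_val_sub hNe hN huv
    exact ⟨l, by omega, h⟩
  · obtain ⟨x, hux⟩ := exists_step (c := 2 * (k : ℤ) + 1) u
    have hxv : Even (v - x).val := by
      rw [ZMod.even_val_sub hNe.two_dvd] at huv ⊢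
      rw [hux.even_val_iff hNe.two_dvd (odd_two_mul_add_one _)]
      tauto
    obtain ⟨l, hl, h⟩ := exists_dWalk_le_of_even_val_sub hNe hN hxv
    exact ⟨l + 1, by omega, DWalk.succ_iff.2 ⟨x, hux, h⟩⟩

theorem two_mul_add_one_le_of_dWalk (hNe : Even N) (hN : 4 * k ^ 2 + 4 ≤ N) {l : ℕ}
    (h : DWalk (NAstep N (-1) 1 (2 * (k : ℤ) + 1) (-(2 * (k : ℤ) + 1))) 0
      ((2 * k ^ 2 + 1 : ℕ) : ZMod N) l) : 2 * k + 1 ≤ l := by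
  have hN2 := hNe.two_dvd
  have hc := odd_two_mul_add_one (k : ℤ)
  by_contra! hl
  have hval : ((2 * k ^ 2 + 1 : ℕ) : ZMod N).val = 2 * k ^ 2 + 1 :=
    ZMod.val_natCast_of_lt (by omega)
  have hodd : Odd l := by
    have := dWalk_even_val_iff hN2 hc h
    rw [hval, ZMod.val_zero] at this
    simpa [parity_simps] using this
  obtain ⟨j, rfl⟩ := hodd
  rw [Nat.add_comm (2 * j), DWalk.add_iff] at h
  obtain ⟨x, h0x, hxv⟩ := h
  obtain ⟨ε, hε, rfl⟩ := (iff_of_even (by simp)).1 (DWalk.one_iff.1 h0x)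
  obtain ⟨a, b, ha, hb, -, -, hv⟩ := (dWalk_two_mul_iff hN2 hc).1 hxv
  have hdvd : (N : ℤ) ∣ (2 * k ^ 2 + 1) - (ε + a + b * (2 * k + 1)) := by
    rw [← ZMod.intCast_eq_intCast_iff_dvd_sub]
    push_cast at hv ⊢
    rw [hv, zero_add]
  have hj : (j : ℤ) + 1 ≤ k := by omega
  have hb' : |b * (2 * k + 1)| ≤ (k - 1) * (2 * k + 1) := by
    rw [abs_mul, abs_of_pos (by positivity : (0 : ℤ) < 2 * k + 1)]
    exact mul_le_mul_of_nonneg_right (by rw [Int.abs_eq_natAbs]; omega) (by positivity)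
  have hεa : |ε + a| ≤ k := by rw [Int.abs_eq_natAbs]; omega
  obtain ⟨hbl, hbu⟩ := abs_le.1 hb'
  obtain ⟨hεal, hεau⟩ := abs_le.1 hεa
  have hpos : 0 < (2 * k ^ 2 + 1) - (ε + a + b * (2 * k + 1)) := by linarith
  have hle := Int.le_of_dvd hpos hdvd
  have hN' : (4 * k ^ 2 + 4 : ℤ) ≤ N := by exact_mod_cast hN
  linarith

end NAstep

theorem stmt_14_general (k N : ℕ) (hNe : Even N)
    (h1 : 4 * k ^ 2 + 4 ≤ N) (h2 : N ≤ 4 * k ^ 2 + 4 * k + 2) :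
    HasDiam (NAstep N (-1) 1 (2 * (k : ℤ) + 1) (-(2 * (k : ℤ) + 1))) (2 * k + 1) := by
  have : NeZero N := ⟨by omega⟩
  exact ⟨NAstep.exists_dWalk_le hNe h2, 0, _, fun _ => NAstep.two_mul_add_one_le_of_dWalk hNe h1⟩

theorem stmt_14 (k N : ℕ) (hk : 1 ≤ k) (hNe : Even N)
    (h1 : 4 * k ^ 2 + 4 ≤ N) (h2 : N ≤ 4 * k ^ 2 + 4 * k + 2) :
    HasDiam (NAstep N (-1) 1 (2 * (k : ℤ) + 1) (-(2 * (k : ℤ) + 1))) (2 * k + 1) :=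
  stmt_14_general k N hNe h1 h2
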